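/- arXiv:2506.13157 — 2 statements merged into one kernel-verified Lean document; each statement's English description precedes it below -/
import Mathlib

section
/- (Representation of AGM contraction, semantic form) Let ∘ be a function assigning to each nonempty W ⊆ M and each A ⊆ M a subset W∘A ⊆ M. Then ∘ satisfies all of the following for all nonempty W and all A, B ⊆ M: (i) W ⊆ W∘A; (ii) if ¬(W ⊆ A) then W∘A = W; (iii) if A ≠ M then ¬(W∘A ⊆ A); (iv) if W ⊆ A then (W∘A) ∩ A ⊆ W; (v) W∘(A∩B) ⊆ (W∘A) ∪ (W∘B); (vi) if ¬(W∘(A∩B) ⊆ A) then W∘A ⊆ W∘(A∩B) — if and only if for every nonempty W ⊆ M there exists a total preorder ≼_W on M faithful to W such that W∘A = W ∪ min(M\A, ≼_W) for all A ⊆ M. -/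
/-!
Given the postulates, put `r ≼ r'` iff `r` survives the contraction by the sentence whose only
non-models are `r` and `r'`. Conjunctive overlap and recovery show that a world surviving the
contraction by `A` also survives the contraction by any weaker sentence it falsifies; conjunctive
inclusion gives the converse transfer. These make `≼` a total preorder, faithful by vacuity, whose
minimal non-models of `A` are exactly the non-models of `A` in `W ∘ A`; by recovery and vacuity
the rest of `W ∘ A` is `W`. Conversely, faithfulness and finiteness of the set of worlds yield the
postulates for `W ∪ min(M \ A, ≼)` directly.
-/

/-- A possible world over the propositional variables `P`. -/
abbrev World (P : Type) := P → Bool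

/-- `minSet S le` is the set of `le`-minimal elements of `S`. -/
def minSet {P : Type} (S : Set (World P)) (le : World P → World P → Prop) :
    Set (World P) :=
  {r | r ∈ S ∧ ∀ r' ∈ S, le r r'}

/-- A total preorder: reflexive, transitive and total. -/
def TotalPreorder {P : Type} (le : World P → World P → Prop) : Prop :=
  Reflexive le ∧ Transitive le ∧ ∀ r r', le r r' ∨ le r' r

/-- `le` is faithful to `W` iff the `le`-minimal worlds are exactly `W`. -/
def Faithful {P : Type} (le : World P → World P → Prop) (W : Set (World P)) : Prop :=
  minSet Set.univ le = W

/-- The strict part of a preorder. -/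
def strictPart {P : Type} (le : World P → World P → Prop) (r r' : World P) : Prop :=
  le r r' ∧ ¬ le r' r

/-- The full-meet preorder of a belief set `W`. -/
def fullMeet {P : Type} (W : Set (World P)) : World P → World P → Prop :=
  fun r r' => r ∈ W ∨ r' ∉ W

/-- Type-B distance: the symmetric difference of the model sets. -/
def distB {P : Type} (W1 W2 : Set (World P)) : Set (World P) :=
  (W1 \ W2) ∪ (W2 \ W1)

/-- Condition (SD) on a sequence of belief sets. -/
def SD {P : Type} {n : ℕ} (W : Fin n → Set (World P)) : Prop :=
  ∀ i j m : Fin n, i < j → j < m → distB (W j) (W m) ⊆ distB (W i) (W m)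

/-- Lexicographic revision of the preorder `le` by the (nonempty) input `A`. -/
def lexRev {P : Type} (le : World P → World P → Prop) (A : Set (World P)) :
    World P → World P → Prop :=
  fun r r' => (r ∈ A ∧ r' ∉ A) ∨ ((r ∈ A ↔ r' ∈ A) ∧ le r r')

/-- `le''` is the moderate contraction of `le` (faithful to `R`) by `B`:
conditions (C1), (C2), (MC) and faithfulness to `R ∪ min(M\B, le)`. -/
def IsModCon {P : Type} (le : World P → World P → Prop) (R B : Set (World P))
    (le'' : World P → World P → Prop) : Prop :=
  TotalPreorder le'' ∧
  (∀ r r', r ∈ B → r' ∈ B → (le'' r r' ↔ le r r')) ∧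
  (∀ r r', r ∉ B → r' ∉ B → (le'' r r' ↔ le r r')) ∧
  (∀ r r', r ∉ B → r' ∈ B → r' ∉ R ∪ minSet Bᶜ le → strictPart le'' r r') ∧
  minSet Set.univ le'' = R ∪ minSet Bᶜ le

variable {P : Type}

/-- The AGM postulates (K∸2)–(K∸5), (K∸7), (K∸8) for the contractions `c A` of the belief set
with models `W`; (K∸1) and (K∸6) hold automatically when sentences are model sets. -/
structure IsAGMContraction (W : Set (World P))
    (c : Set (World P) → Set (World P)) : Prop where
  inclusion : ∀ A, W ⊆ c A
  vacuity : ∀ A, ¬ W ⊆ A → c A = W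
  success : ∀ A, A ≠ Set.univ → ¬ c A ⊆ A
  recovery : ∀ A, W ⊆ A → c A ∩ A ⊆ W
  conjunctive_overlap : ∀ A B, c (A ∩ B) ⊆ c A ∪ c B
  conjunctive_inclusion : ∀ A B, ¬ c (A ∩ B) ⊆ A → c A ⊆ c (A ∩ B)

section minSet

variable {le : World P → World P → Prop}

theorem TotalPreorder.wellFounded_strictPart [Finite P] (hle : TotalPreorder le) :
    WellFounded (strictPart le) :=
  have : IsTrans _ (strictPart le) :=
    ⟨fun _ _ _ hab hbc => ⟨hle.2.1 hab.1 hbc.1, fun hca => hab.2 (hle.2.1 hbc.1 hca)⟩⟩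
  have : Std.Irrefl (strictPart le) := ⟨fun _ h => h.2 h.1⟩
  Finite.wellFounded_of_trans_of_irrefl _

theorem TotalPreorder.minSet_nonempty [Finite P] (hle : TotalPreorder le) {S : Set (World P)}
    (hS : S.Nonempty) : (minSet S le).Nonempty := by
  obtain ⟨x, hxS, hx⟩ := hle.wellFounded_strictPart.has_min S hS
  exact ⟨x, hxS, fun y hy =>
    (hle.2.2 x y).elim id fun hyx => not_not.1 fun hxy => hx y hy ⟨hyx, hxy⟩⟩

theorem minSet_compl_inter_subset (A B : Set (World P)) :
    minSet (A ∩ B)ᶜ le ⊆ minSet Aᶜ le ∪ minSet Bᶜ le := by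
  rintro x ⟨hx, hmin⟩
  rw [Set.compl_inter] at hx hmin
  exact hx.imp (fun hA => ⟨hA, fun y hy => hmin y (.inl hy)⟩)
    (fun hB => ⟨hB, fun y hy => hmin y (.inr hy)⟩)

theorem minSet_subset_minSet_of_mem (htr : Transitive le) {S T : Set (World P)} (hST : S ⊆ T)
    {x : World P} (hxS : x ∈ S) (hxT : x ∈ minSet T le) : minSet S le ⊆ minSet T le :=
  fun _ hy => ⟨hST hy.1, fun z hz => htr (hy.2 x hxS) (hxT.2 z hz)⟩

theorem Faithful.le_of_mem {W : Set (World P)} (hF : Faithful le W) {w : World P} (hw : w ∈ W)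
    (r : World P) : le w r :=
  (hF.symm ▸ hw : w ∈ minSet Set.univ le).2 r trivial

theorem Faithful.mem_of_le {W : Set (World P)} (hF : Faithful le W) (htr : Transitive le)
    {w r : World P} (hw : w ∈ W) (hrw : le r w) : r ∈ W :=
  hF ▸ ⟨trivial, fun s _ => htr hrw (hF.le_of_mem hw s)⟩

theorem Faithful.mem_minSet {W : Set (World P)} (hF : Faithful le W) {S : Set (World P)}
    {w : World P} (hw : w ∈ W) (hwS : w ∈ S) : w ∈ minSet S le :=
  ⟨hwS, fun r _ => hF.le_of_mem hw r⟩

end minSet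

theorem isAGMContraction_of_faithful [Finite P] {W : Set (World P)}
    {le : World P → World P → Prop} (hle : TotalPreorder le) (hF : Faithful le W) :
    IsAGMContraction W fun A => W ∪ minSet Aᶜ le where
  inclusion _ := Set.subset_union_left
  vacuity A hWA := by
    obtain ⟨w, hw, hwA⟩ := Set.not_subset.mp hWA
    exact Set.union_eq_left.mpr fun r hr => hF.mem_of_le hle.2.1 hw (hr.2 w hwA)
  success A hA hsub := by
    obtain ⟨r, hr⟩ := hle.minSet_nonempty (Set.nonempty_compl.mpr hA)
    exact hr.1 (hsub (.inr hr))
  recovery A _ := by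
    rintro x ⟨hx | hx, hxA⟩
    exacts [hx, absurd hxA hx.1]
  conjunctive_overlap A B := by
    rintro x (hx | hx)
    · exact .inl (.inl hx)
    · exact (minSet_compl_inter_subset A B hx).imp .inr .inr
  conjunctive_inclusion A B hns := by
    obtain ⟨x, hx, hxA⟩ := Set.not_subset.mp hns
    have hxAc : x ∈ (A ∩ B)ᶜ := fun h => hxA h.1
    have hxmin : x ∈ minSet (A ∩ B)ᶜ le := hx.elim (hF.mem_minSet · hxAc) id
    exact Set.union_subset_union_right W <|
      minSet_subset_minSet_of_mem hle.2.1 (Set.compl_subset_compl.mpr Set.inter_subset_left)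
        hxA hxmin

def contractionRel (c : Set (World P) → Set (World P)) (r r' : World P) : Prop :=
  r ∈ c {r, r'}ᶜ

namespace IsAGMContraction

variable {W : Set (World P)} {c : Set (World P) → Set (World P)}

theorem exists_mem_notMem (hc : IsAGMContraction W c) {A : Set (World P)} (hA : A ≠ Set.univ) :
    ∃ x ∈ c A, x ∉ A :=
  Set.not_subset.mp (hc.success A hA)

theorem mem_or_mem_compl_pair (hc : IsAGMContraction W c) (r r' : World P) :
    r ∈ c {r, r'}ᶜ ∨ r' ∈ c {r, r'}ᶜ := by
  obtain ⟨x, hx, hxr⟩ := hc.exists_mem_notMem (A := {r, r'}ᶜ)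
    (Set.compl_ne_univ.mpr (Set.insert_nonempty _ _))
  rcases not_not.mp hxr with rfl | rfl
  exacts [.inl hx, .inr hx]

theorem mem_of_subset (hc : IsAGMContraction W c) {A E : Set (World P)} (hAE : A ⊆ E)
    {x : World P} (hx : x ∈ c A) (hxE : x ∉ E) : x ∈ c E := by
  -- `A` is the conjunction of `E` and `A ∨ ¬E`, and `x` cannot survive contraction by the latter
  -- without already being a model of `W`.
  have hA : E ∩ (A ∪ Eᶜ) = A := by
    rw [Set.inter_union_distrib_left, Set.inter_compl_self, Set.union_empty,
      Set.inter_eq_self_of_subset_right hAE]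
  have := hc.conjunctive_overlap E (A ∪ Eᶜ)
  rw [hA] at this
  refine (this hx).elim id fun hx' => hc.inclusion E ?_
  by_cases hW : W ⊆ A ∪ Eᶜ
  · exact hc.recovery _ hW ⟨hx', .inr hxE⟩
  · rwa [hc.vacuity _ hW] at hx'

theorem subset_of_mem (hc : IsAGMContraction W c) {A B : Set (World P)} (hAB : A ⊆ B)
    {x : World P} (hx : x ∈ c A) (hxB : x ∉ B) : c B ⊆ c A := by
  have hBA : B ∩ A = A := Set.inter_eq_self_of_subset_right hAB
  have := hc.conjunctive_inclusion B A (by rw [hBA]; exact fun h => hxB (h hx))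
  rwa [hBA] at this

theorem mem_of_contractionRel (hc : IsAGMContraction W c) {A : Set (World P)} {r r' : World P}
    (hrr' : contractionRel c r r') (hA : A ⊆ {r, r'}ᶜ) (hr' : r' ∈ c A) : r ∈ c A :=
  hc.subset_of_mem hA hr' (fun h => h (.inr rfl)) hrr'

theorem totalPreorder_contractionRel (hc : IsAGMContraction W c) :
    TotalPreorder (contractionRel c) := by
  refine ⟨fun r => ?_, fun a b d hab hbd => ?_, fun r r' => ?_⟩
  · exact (hc.mem_or_mem_compl_pair r r).elim id id
  · have hT : ({a, b, d}ᶜ : Set (World P)) ≠ Set.univ :=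
      Set.compl_ne_univ.mpr (Set.insert_nonempty _ _)
    have hTab : ({a, b, d}ᶜ : Set (World P)) ⊆ {a, b}ᶜ :=
      Set.compl_subset_compl.mpr (by simp [Set.insert_subset_iff])
    have hTbd : ({a, b, d}ᶜ : Set (World P)) ⊆ {b, d}ᶜ :=
      Set.compl_subset_compl.mpr (Set.subset_insert _ _)
    have hTad : ({a, b, d}ᶜ : Set (World P)) ⊆ {a, d}ᶜ :=
      Set.compl_subset_compl.mpr (by simp [Set.insert_subset_iff])
    obtain ⟨x, hx, hxT⟩ := hc.exists_mem_notMem hT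
    have ha : a ∈ c {a, b, d}ᶜ := by
      rcases not_not.mp hxT with rfl | rfl | rfl
      · exact hx
      · exact hc.mem_of_contractionRel hab hTab hx
      · exact hc.mem_of_contractionRel hab hTab (hc.mem_of_contractionRel hbd hTbd hx)
    exact hc.mem_of_subset hTad ha fun h => h (.inl rfl)
  · refine (hc.mem_or_mem_compl_pair r r').imp id fun h => ?_
    rwa [contractionRel, Set.pair_comm]

theorem faithful_contractionRel (hc : IsAGMContraction W c) (hW : W.Nonempty) :
    Faithful (contractionRel c) W := by
  obtain ⟨w, hw⟩ := hW
  refine Set.Subset.antisymm (fun r hr => ?_) fun r hr => ⟨trivial, fun r' _ => hc.inclusion _ hr⟩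
  have hrw : r ∈ c {r, w}ᶜ := hr.2 w trivial
  rwa [hc.vacuity {r, w}ᶜ fun h => h hw (by simp)] at hrw

theorem inter_compl_eq_minSet (hc : IsAGMContraction W c) (A : Set (World P)) :
    c A ∩ Aᶜ = minSet Aᶜ (contractionRel c) := by
  have pair_disjoint {x y : World P} (hx : x ∉ A) (hy : y ∉ A) : A ⊆ {x, y}ᶜ := by
    rintro z hz (rfl | rfl)
    exacts [hx hz, hy hz]
  refine Set.Subset.antisymm (fun x ⟨hx, hxA⟩ => ⟨hxA, fun y hyA => ?_⟩) fun x ⟨hxA, hmin⟩ => ?_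
  · exact hc.mem_of_subset (pair_disjoint hxA hyA) hx fun h => h (.inl rfl)
  · obtain ⟨y, hy, hyA⟩ := hc.exists_mem_notMem (A := A) fun h => hxA (h ▸ Set.mem_univ x)
    exact ⟨hc.mem_of_contractionRel (hmin y hyA) (pair_disjoint hxA hyA) hy, hxA⟩

theorem eq_union_inter_compl (hc : IsAGMContraction W c) (A : Set (World P)) :
    c A = W ∪ c A ∩ Aᶜ := by
  by_cases hWA : W ⊆ A
  · refine Set.Subset.antisymm (fun x hx => ?_)
      (Set.union_subset (hc.inclusion A) Set.inter_subset_left)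
    by_cases hxA : x ∈ A
    exacts [.inl (hc.recovery A hWA ⟨hx, hxA⟩), .inr ⟨hx, hxA⟩]
  · rw [hc.vacuity A hWA]
    exact (Set.union_eq_left.mpr Set.inter_subset_left).symm

theorem eq_union_minSet (hc : IsAGMContraction W c) (A : Set (World P)) :
    c A = W ∪ minSet Aᶜ (contractionRel c) := by
  rw [← hc.inter_compl_eq_minSet, ← hc.eq_union_inter_compl]

end IsAGMContraction

theorem isAGMContraction_iff_exists_faithful [Finite P] {W : Set (World P)} (hW : W.Nonempty)
    {c : Set (World P) → Set (World P)} :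
    IsAGMContraction W c ↔
      ∃ le, TotalPreorder le ∧ Faithful le W ∧ ∀ A, c A = W ∪ minSet Aᶜ le := by
  refine ⟨fun hc => ⟨_, hc.totalPreorder_contractionRel, hc.faithful_contractionRel hW,
    hc.eq_union_minSet⟩, ?_⟩
  rintro ⟨le, hle, hF, hc⟩
  rw [show c = fun A => W ∪ minSet Aᶜ le from funext hc]
  exact isAGMContraction_of_faithful hle hF

theorem statement7_general {P : Type} [Fintype P]
    (con : Set (World P) → Set (World P) → Set (World P)) :
    (∀ W A B : Set (World P), W.Nonempty →
      (W ⊆ con W A) ∧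
      (¬ W ⊆ A → con W A = W) ∧
      (A ≠ Set.univ → ¬ con W A ⊆ A) ∧
      (W ⊆ A → (con W A) ∩ A ⊆ W) ∧
      (con W (A ∩ B) ⊆ con W A ∪ con W B) ∧
      (¬ con W (A ∩ B) ⊆ A → con W A ⊆ con W (A ∩ B))) ↔
    (∀ W : Set (World P), W.Nonempty →
      ∃ le : World P → World P → Prop,
        TotalPreorder le ∧ Faithful le W ∧
        ∀ A, con W A = W ∪ minSet Aᶜ le) := by
  refine ⟨fun h W hW => (isAGMContraction_iff_exists_faithful hW).mp ?_,
    fun h W A B hW => ?_⟩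
  · exact ⟨fun A => (h W A A hW).1, fun A => (h W A A hW).2.1, fun A => (h W A A hW).2.2.1,
      fun A => (h W A A hW).2.2.2.1, fun A B => (h W A B hW).2.2.2.2.1,
      fun A B => (h W A B hW).2.2.2.2.2⟩
  · have hc := (isAGMContraction_iff_exists_faithful hW).mpr (h W hW)
    exact ⟨hc.inclusion A, hc.vacuity A, hc.success A, hc.recovery A, hc.conjunctive_overlap A B,
      hc.conjunctive_inclusion A B⟩

theorem statement7 {P : Type} [Fintype P] [Nonempty P]
    (con : Set (World P) → Set (World P) → Set (World P)) :
    (∀ W A B : Set (World P), W.Nonempty →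
      (W ⊆ con W A) ∧
      (¬ W ⊆ A → con W A = W) ∧
      (A ≠ Set.univ → ¬ con W A ⊆ A) ∧
      (W ⊆ A → (con W A) ∩ A ⊆ W) ∧
      (con W (A ∩ B) ⊆ con W A ∪ con W B) ∧
      (¬ con W (A ∩ B) ⊆ A → con W A ⊆ con W (A ∩ B))) ↔
    (∀ W : Set (World P), W.Nonempty →
      ∃ le : World P → World P → Prop,
        TotalPreorder le ∧ Faithful le W ∧
        ∀ A, con W A = W ∪ minSet Aᶜ le) :=
  statement7_general con
end

section
/- Let ≼ be a total preorder on M and let A ⊆ M be nonempty. Then the lexicographic revision ≼' of ≼ by A is a total preorder on M satisfying: (R1) for r,r' ∈ A, r ≼' r' iff r ≼ r'; (R2) for r,r' ∈ M\A, r ≼' r' iff r ≼ r'; (LR) for every r ∈ A and r' ∈ M\A, r ≺' r'; moreover min(M, ≼') = min(A, ≼) (so ≼' is faithful to the revision result), and ≼' is the unique total preorder on M satisfying (R1), (R2) and (LR). -/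
/-!
Lexicographic revision compares two worlds first by membership in `A` and only then by `le`.
Each clause follows by splitting on whether the two worlds lie in `A`; in particular (R1), (R2)
and (LR) already determine a relation in all four cases, which gives uniqueness.
-/

section LexRev

variable {P : Type} {le : World P → World P → Prop} {A : Set (World P)} {r r' : World P}

theorem lexRev_iff_of_mem (hr : r ∈ A) (hr' : r' ∈ A) : lexRev le A r r' ↔ le r r' := by
  simp [lexRev, hr, hr']

theorem lexRev_iff_of_notMem (hr : r ∉ A) (hr' : r' ∉ A) : lexRev le A r r' ↔ le r r' := by
  simp [lexRev, hr, hr']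

theorem lexRev_of_mem_of_notMem (hr : r ∈ A) (hr' : r' ∉ A) : lexRev le A r r' :=
  Or.inl ⟨hr, hr'⟩

theorem not_lexRev_of_notMem_of_mem (hr : r ∉ A) (hr' : r' ∈ A) : ¬ lexRev le A r r' := by
  simp [lexRev, hr, hr']

theorem strictPart_lexRev_of_mem_of_notMem (hr : r ∈ A) (hr' : r' ∉ A) :
    strictPart (lexRev le A) r r' :=
  ⟨lexRev_of_mem_of_notMem hr hr', not_lexRev_of_notMem_of_mem hr' hr⟩

theorem TotalPreorder.lexRev (hle : TotalPreorder le) (A : Set (World P)) :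
    TotalPreorder (lexRev le A) := by
  obtain ⟨hrefl, htrans, htot⟩ := hle
  refine ⟨fun r => Or.inr ⟨Iff.rfl, hrefl r⟩, ?_, fun r r' => ?_⟩
  · rintro r s t (⟨hr, hs⟩ | ⟨hrs, hle_rs⟩) (⟨hs', ht⟩ | ⟨hst, hle_st⟩)
    · exact absurd hs' hs
    · exact Or.inl ⟨hr, fun ht => hs (hst.mpr ht)⟩
    · exact Or.inl ⟨hrs.mpr hs', ht⟩
    · exact Or.inr ⟨hrs.trans hst, htrans hle_rs hle_st⟩
  · by_cases hr : r ∈ A <;> by_cases hr' : r' ∈ A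
    · exact (htot r r').imp (lexRev_iff_of_mem hr hr').2 (lexRev_iff_of_mem hr' hr).2
    · exact Or.inl (lexRev_of_mem_of_notMem hr hr')
    · exact Or.inr (lexRev_of_mem_of_notMem hr' hr)
    · exact (htot r r').imp (lexRev_iff_of_notMem hr hr').2 (lexRev_iff_of_notMem hr' hr).2

theorem minSet_univ_lexRev (hA : A.Nonempty) : minSet Set.univ (lexRev le A) = minSet A le := by
  ext r
  constructor
  · rintro ⟨-, hmin⟩
    have hrA : r ∈ A := by
      obtain ⟨a, ha⟩ := hA
      by_contra hrA
      exact not_lexRev_of_notMem_of_mem hrA ha (hmin a trivial)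
    exact ⟨hrA, fun r' hr' => (lexRev_iff_of_mem hrA hr').1 (hmin r' trivial)⟩
  · rintro ⟨hrA, hmin⟩
    refine ⟨trivial, fun r' _ => ?_⟩
    by_cases hr' : r' ∈ A
    · exact (lexRev_iff_of_mem hrA hr').2 (hmin r' hr')
    · exact lexRev_of_mem_of_notMem hrA hr'

theorem eq_lexRev {le' : World P → World P → Prop}
    (h₁ : ∀ r r', r ∈ A → r' ∈ A → (le' r r' ↔ le r r'))
    (h₂ : ∀ r r', r ∉ A → r' ∉ A → (le' r r' ↔ le r r'))
    (h₃ : ∀ r r', r ∈ A → r' ∉ A → strictPart le' r r') :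
    le' = lexRev le A := by
  funext r r'
  apply propext
  by_cases hr : r ∈ A <;> by_cases hr' : r' ∈ A
  · rw [h₁ r r' hr hr', lexRev_iff_of_mem hr hr']
  · exact iff_of_true (h₃ r r' hr hr').1 (lexRev_of_mem_of_notMem hr hr')
  · exact iff_of_false (h₃ r' r hr' hr).2 (not_lexRev_of_notMem_of_mem hr hr')
  · rw [h₂ r r' hr hr', lexRev_iff_of_notMem hr hr']

end LexRev

theorem statement9_general {P : Type}
    (le : World P → World P → Prop) (hle : TotalPreorder le)
    (A : Set (World P)) (hA : A.Nonempty) :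
    TotalPreorder (lexRev le A) ∧
    (∀ r r', r ∈ A → r' ∈ A → (lexRev le A r r' ↔ le r r')) ∧
    (∀ r r', r ∉ A → r' ∉ A → (lexRev le A r r' ↔ le r r')) ∧
    (∀ r r', r ∈ A → r' ∉ A → strictPart (lexRev le A) r r') ∧
    minSet Set.univ (lexRev le A) = minSet A le ∧
    (∀ le' : World P → World P → Prop,
      TotalPreorder le' →
      (∀ r r', r ∈ A → r' ∈ A → (le' r r' ↔ le r r')) →
      (∀ r r', r ∉ A → r' ∉ A → (le' r r' ↔ le r r')) →
      (∀ r r', r ∈ A → r' ∉ A → strictPart le' r r') →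
      ∀ r r', le' r r' ↔ lexRev le A r r') :=
  ⟨hle.lexRev A,
    fun _ _ => lexRev_iff_of_mem,
    fun _ _ => lexRev_iff_of_notMem,
    fun _ _ => strictPart_lexRev_of_mem_of_notMem,
    minSet_univ_lexRev hA,
    fun _ _ h₁ h₂ h₃ _ _ => eq_lexRev h₁ h₂ h₃ ▸ Iff.rfl⟩

theorem statement9 {P : Type} [Fintype P] [Nonempty P]
    (le : World P → World P → Prop) (hle : TotalPreorder le)
    (A : Set (World P)) (hA : A.Nonempty) :
    TotalPreorder (lexRev le A) ∧
    (∀ r r', r ∈ A → r' ∈ A → (lexRev le A r r' ↔ le r r')) ∧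
    (∀ r r', r ∉ A → r' ∉ A → (lexRev le A r r' ↔ le r r')) ∧
    (∀ r r', r ∈ A → r' ∉ A → strictPart (lexRev le A) r r') ∧
    minSet Set.univ (lexRev le A) = minSet A le ∧
    (∀ le' : World P → World P → Prop,
      TotalPreorder le' →
      (∀ r r', r ∈ A → r' ∈ A → (le' r r' ↔ le r r')) →
      (∀ r r', r ∉ A → r' ∉ A → (le' r r' ↔ le r r')) →
      (∀ r r', r ∈ A → r' ∉ A → strictPart le' r r') →
      ∀ r r', le' r r' ↔ lexRev le A r r') :=
  statement9_general le hle A hA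
end
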